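/- arXiv:1009.2292 — 2 statements merged into one kernel-verified Lean document; each statement's English description precedes it below -/
import Mathlib

section
/- Hole cancellation: let G be a smooth domain in the triangular lattice X and let W be a hole of G, i.e. a bounded simply connected smooth domain whose interior is a connected component of the complement of G and which shares a common part of the boundary with G. Then for every common boundary point p of G and W one has |S₁(p) ∩ W| + |S₁(p) ∩ G| = 6 and |S₂(p) ∩ W| + |S₂(p) ∩ G| = 12, and consequently the curvatures cancel: K_W(p) + K_G(p) = 0. -/
/-!
Common framework: subgraphs of an ambient simple graph are modelled as vertex sets
with the induced graph structure (this captures condition (iv): domains are induced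
subgraphs). Spheres, curvature, interior/boundary points, domains, smooth domains,
simple connectivity, Euler characteristic, and the triangular lattice `tri`.
-/

namespace TriGB

variable {V : Type*}

/-- The subgraph of `G` induced on the vertex set `T`, as a graph on the ambient
vertex type (vertices outside `T` are isolated). -/
def restrict (G : SimpleGraph V) (T : Set V) : SimpleGraph V where
  Adj a b := a ∈ T ∧ b ∈ T ∧ G.Adj a b
  symm := ⟨fun _ _ ⟨ha, hb, h⟩ => ⟨hb, ha, h.symm⟩⟩
  loopless := ⟨fun a ⟨_, _, h⟩ => G.loopless.irrefl a h⟩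

/-- The neighbours of `p` lying inside `T` (the vertex set of the unit sphere of `p`
in the subgraph induced on `T`, for `p ∈ T`). -/
def nbrs (G : SimpleGraph V) (T : Set V) (p : V) : Set V := {q | q ∈ T ∧ G.Adj p q}

/-- The vertex set of the sphere of radius `r` around `p` in the subgraph induced on `T`:
points of `T` at graph distance `r` from `p` within that subgraph. -/
def sphVerts (G : SimpleGraph V) (T : Set V) (p : V) (r : ℕ) : Set V :=
  {q | q ∈ T ∧ (restrict G T).Reachable p q ∧ (restrict G T).dist p q = r}

/-- The vertex set of the ball of radius `r` around `p` in the subgraph induced on `T`. -/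
def ballVerts (G : SimpleGraph V) (T : Set V) (p : V) (r : ℕ) : Set V :=
  {q | q ∈ T ∧ (restrict G T).Reachable p q ∧ (restrict G T).dist p q ≤ r}

/-- The edges of the sphere of radius `r` around `p`: edges of the (induced) subgraph
joining two vertices at distance `r` from `p`. -/
def sphEdges (G : SimpleGraph V) (T : Set V) (p : V) (r : ℕ) : Set (Sym2 V) :=
  {e | ∃ a b, e = s(a, b) ∧ a ∈ sphVerts G T p r ∧ b ∈ sphVerts G T p r ∧ G.Adj a b}

/-- The arc length `|S_r(p)|`: the number of edges of the sphere of radius `r`. -/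
noncomputable def arcLen (G : SimpleGraph V) (T : Set V) (p : V) (r : ℕ) : ℕ :=
  (sphEdges G T p r).ncard

/-- The (second order Puiseux) curvature `K(p) = 2|S₁(p)| - |S₂(p)|`. -/
noncomputable def curv (G : SimpleGraph V) (T : Set V) (p : V) : ℤ :=
  2 * (arcLen G T p 1 : ℤ) - (arcLen G T p 2 : ℤ)

/-- `p` is an interior point of `T`: its unit sphere within `T` coincides with its
unit sphere in the ambient graph (all neighbours, with all edges between them,
lie in `T`; in the induced model this means all ambient neighbours belong to `T`). -/
def IsInteriorPt (G : SimpleGraph V) (T : Set V) (p : V) : Prop :=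
  p ∈ T ∧ ∀ q, G.Adj p q → q ∈ T

/-- `p` is a boundary point of `T`: a non-interior point of `T` adjacent to an
interior point. -/
def IsBoundaryPt (G : SimpleGraph V) (T : Set V) (p : V) : Prop :=
  p ∈ T ∧ ¬ IsInteriorPt G T p ∧ ∃ q, G.Adj p q ∧ IsInteriorPt G T q

/-- The set of interior points of `T`. -/
def interiorSet (G : SimpleGraph V) (T : Set V) : Set V := {p | IsInteriorPt G T p}

/-- The set of boundary points of `T`. -/
def boundarySet (G : SimpleGraph V) (T : Set V) : Set V := {p | IsBoundaryPt G T p}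

/-- `T` is a one-dimensional graph: every vertex of `T` has a nonempty and edgeless
unit sphere within `T`. -/
def OneDimSet (G : SimpleGraph V) (T : Set V) : Prop :=
  ∀ p ∈ T, (nbrs G T p).Nonempty ∧ ∀ q ∈ nbrs G T p, ∀ r ∈ nbrs G T p, ¬ G.Adj q r

/-- `p` is a two-dimensional point of `T`: its unit sphere within `T` is a
one-dimensional graph. -/
def TwoDimPt (G : SimpleGraph V) (T : Set V) (p : V) : Prop :=
  OneDimSet G (nbrs G T p)

/-- A domain: (i) two-dimensional, (ii) every vertex interior or boundary,
(iii) the boundary points form a one-dimensional graph, (iv) induced (built into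
the model), (v) interior points sharing a common boundary point are adjacent or
both adjacent to a third interior point. -/
def IsDomain (G : SimpleGraph V) (T : Set V) : Prop :=
  (∀ p ∈ T, TwoDimPt G T p) ∧
  (∀ p ∈ T, IsInteriorPt G T p ∨ IsBoundaryPt G T p) ∧
  OneDimSet G (boundarySet G T) ∧
  (∀ p q, IsInteriorPt G T p → IsInteriorPt G T q → p ≠ q →
    (∃ b, IsBoundaryPt G T b ∧ G.Adj p b ∧ G.Adj q b) →
    (G.Adj p q ∨ ∃ r, IsInteriorPt G T r ∧ r ≠ p ∧ r ≠ q ∧ G.Adj p r ∧ G.Adj q r))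

/-- A smooth domain: a domain whose complement is also a domain. -/
def IsSmoothDomain (G : SimpleGraph V) (T : Set V) : Prop :=
  IsDomain G T ∧ IsDomain G Tᶜ

/-- A closed loop in `T`: a cyclic sequence of points of `T` such that consecutive
points are equal or adjacent (curves are loops; trivial loops are constant). -/
def IsLoopIn (G : SimpleGraph V) (T : Set V) {n : ℕ} (x : Fin (n + 1) → V) : Prop :=
  (∀ i, x i ∈ T) ∧ ∀ i, x i = x (i + 1) ∨ G.Adj (x i) (x (i + 1))

/-- An elementary deformation step between loops in `T`: exactly one point moves,
by distance `1`. -/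
def LoopStep (G : SimpleGraph V) (T : Set V) {n : ℕ} (x y : Fin (n + 1) → V) : Prop :=
  IsLoopIn G T x ∧ IsLoopIn G T y ∧ ∃ j, G.Adj (x j) (y j) ∧ ∀ i, i ≠ j → x i = y i

/-- `T` is simply connected: every closed loop of interior points can be deformed,
by finitely many elementary steps within the interior, to a trivial (constant) loop. -/
def SimplyConnected (G : SimpleGraph V) (T : Set V) : Prop :=
  ∀ (n : ℕ) (x : Fin (n + 1) → V), IsLoopIn G (interiorSet G T) x →
    ∃ c : V, Relation.ReflTransGen (LoopStep G (interiorSet G T)) x (fun _ => c)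

/-- The edges of the subgraph induced on `T`. -/
def edgesOf (G : SimpleGraph V) (T : Set V) : Set (Sym2 V) :=
  {e | ∃ a b, e = s(a, b) ∧ a ∈ T ∧ b ∈ T ∧ G.Adj a b}

/-- The (triangular) faces of the subgraph induced on `T`: triples of mutually
adjacent vertices of `T`. -/
def facesOf (G : SimpleGraph V) (T : Set V) : Set (Finset V) :=
  {t | t.card = 3 ∧ ↑t ⊆ T ∧ ∀ a ∈ t, ∀ b ∈ t, a ≠ b → G.Adj a b}

/-- The Euler characteristic `χ = v - e + f`. -/
noncomputable def euler (G : SimpleGraph V) (T : Set V) : ℤ :=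
  (T.ncard : ℤ) - ((edgesOf G T).ncard : ℤ) + ((facesOf G T).ncard : ℤ)

/-- The total boundary curvature of a domain. -/
noncomputable def totalCurv (G : SimpleGraph V) (T : Set V) : ℤ :=
  ∑ᶠ p ∈ boundarySet G T, curv G T p

/-- The ball of radius 1 around `q` in the ambient graph. -/
def ball1 (G : SimpleGraph V) (q : V) : Set V := insert q (G.neighborSet q)

/-- `T` is a cycle (a simple closed one-dimensional graph): nonempty, one-dimensional,
connected, and every vertex has exactly two neighbours within `T`. -/
def IsCycleSet (G : SimpleGraph V) (T : Set V) : Prop :=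
  T.Nonempty ∧ OneDimSet G T ∧ (∀ a ∈ T, ∀ b ∈ T, (restrict G T).Reachable a b) ∧
  ∀ q ∈ T, (nbrs G T q).ncard = 2

/-- For a general graph: the number of edges of the unit sphere of `g` (the subgraph
induced on the neighbours of `g`). -/
noncomputable def sphereEdgeCount (G : SimpleGraph V) (g : V) : ℕ :=
  (edgesOf G (G.neighborSet g)).ncard

/-- The boundary points of a general graph: vertices whose unit sphere is
one-dimensional but not closed (not a cycle). -/
def boundaryVerts (G : SimpleGraph V) : Set V :=
  {g | OneDimSet G (G.neighborSet g) ∧ ¬ IsCycleSet G (G.neighborSet g)}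

open Classical in
/-- The combinatorial Puiseux curvature: `6 - |S₁(g)|` at interior points (unit sphere
a cycle) and `3 - |S₁(g)|` at boundary points. -/
noncomputable def K1 (G : SimpleGraph V) (g : V) : ℤ :=
  if IsCycleSet G (G.neighborSet g) then 6 - (sphereEdgeCount G g : ℤ)
  else 3 - (sphereEdgeCount G g : ℤ)

/-- `A` is a connected component of the subgraph induced on `U`. -/
def IsComponentOf (G : SimpleGraph V) (A U : Set V) : Prop :=
  A.Nonempty ∧ A ⊆ U ∧ (∀ a ∈ A, ∀ b ∈ A, (restrict G A).Reachable a b) ∧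
  ∀ a ∈ A, ∀ b ∈ U, G.Adj a b → b ∈ A

/-- The six unit directions of the triangular lattice. -/
def hexDirs : Set (ℤ × ℤ) := {(1, 0), (-1, 0), (0, 1), (0, -1), (1, -1), (-1, 1)}

lemma neg_mem_hexDirs {d : ℤ × ℤ} (hd : d ∈ hexDirs) : -d ∈ hexDirs := by
  simp only [hexDirs, Set.mem_insert_iff, Set.mem_singleton_iff] at hd ⊢
  rcases hd with rfl | rfl | rfl | rfl | rfl | rfl <;> simp [Prod.ext_iff]

/-- The triangular lattice: the graph on `ℤ²` in which `(k,l)` is adjacent to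
`(k±1,l)`, `(k,l±1)`, `(k+1,l-1)`, `(k-1,l+1)`. -/
def tri : SimpleGraph (ℤ × ℤ) where
  Adj p q := p - q ∈ hexDirs
  symm := by
    constructor
    intro p q h
    show q - p ∈ hexDirs
    rw [show q - p = -(p - q) by ring]
    exact neg_mem_hexDirs h
  loopless := by
    constructor
    intro p h
    simp only [sub_self, hexDirs, Set.mem_insert_iff, Set.mem_singleton_iff] at h
    rcases h with h | h | h | h | h | h <;> simp [Prod.ext_iff] at h


/-- `W` is a hole of `T`: a bounded (finite) simply connected smooth domain whose
interior is a connected component of the complement of `T`, sharing a common part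
of the boundary with `T`. -/
def IsHole (G : SimpleGraph V) (T W : Set V) : Prop :=
  W.Finite ∧ IsSmoothDomain G W ∧ SimplyConnected G W ∧
  IsComponentOf G (interiorSet G W) Tᶜ ∧
  (boundarySet G T ∩ boundarySet G W).Nonempty


/-!
At a common boundary point `q` of `T` and its hole `W`, every neighbour of `q` is interior to `T`,
interior to `W`, or again a common boundary point: going around the hexagon of `q`, the neighbours
lying in `T` form a single arc whose inner points are interior to `T` (by the axioms of a domain),
and the complementary arc lies in the interior of `W`, since `int W` is a whole connected component
of `Tᶜ`. Hence every lattice triangle with such an apex lies in `T` or in `W`, and never in both,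
because the boundary of `T` contains no triangle.

For `r = 1, 2`, an edge of the lattice sphere of radius `r` around `p` lies on the sphere `S_r(p)`
of a domain exactly when the triangle it spans with `p`, resp. with the common neighbour of its ends
at distance `1` from `p`, lies in that domain. So the `6`, resp. `12`, edges of the lattice sphere
are split between the spheres of `T` and of `W`.
-/

section Spheres

variable {G : SimpleGraph V} {S : Set V} {p x : V}

lemma mem_sphVerts_iff {r : ℕ} :
    x ∈ sphVerts G S p r ↔ x ∈ S ∧ (restrict G S).edist p x = r := by
  refine and_congr_right fun _ =>
    ⟨fun ⟨hr, hd⟩ => hd ▸ hr.coe_dist_eq_edist.symm, fun h => ?_⟩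
  have hr : (restrict G S).Reachable p x :=
    SimpleGraph.edist_ne_top_iff_reachable.1 (by simp [h])
  exact ⟨hr, by exact_mod_cast hr.coe_dist_eq_edist.trans h⟩

lemma mem_sphVerts_one (hp : p ∈ S) : x ∈ sphVerts G S p 1 ↔ x ∈ S ∧ G.Adj p x := by
  rw [mem_sphVerts_iff, Nat.cast_one, SimpleGraph.edist_eq_one_iff_adj]
  exact ⟨fun ⟨hx, h⟩ => ⟨hx, h.2.2⟩, fun ⟨hx, h⟩ => ⟨hx, hp, hx, h⟩⟩

lemma mem_sphVerts_two (hp : p ∈ S) :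
    x ∈ sphVerts G S p 2 ↔
      x ∈ S ∧ x ≠ p ∧ ¬ G.Adj p x ∧ ∃ m ∈ S, G.Adj p m ∧ G.Adj m x := by
  rw [mem_sphVerts_iff, Nat.cast_ofNat, SimpleGraph.edist_eq_two_iff]
  simp only [restrict, SimpleGraph.commonNeighbors, SimpleGraph.neighborSet, Set.Nonempty,
    Set.mem_inter_iff, Set.mem_ofPred_eq]
  constructor
  · rintro ⟨hx, hpx, hadj, m, ⟨-, hm, hpm⟩, -, -, hxm⟩
    exact ⟨hx, Ne.symm hpx, fun h => hadj ⟨hp, hx, h⟩, m, hm, hpm, hxm.symm⟩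
  · rintro ⟨hx, hxp, hadj, m, hm, hpm, hmx⟩
    exact ⟨hx, Ne.symm hxp, fun h => hadj h.2.2, m, ⟨hp, hm, hpm⟩, hx, hm, hmx.symm⟩

end Spheres

lemma ncard_image_add_ncard_image {ι α : Type*} {f : ι → α} {D : Set ι} (hD : D.Finite)
    (hf : D.InjOn f) {P Q : ι → Prop} (hPQ : ∀ i ∈ D, P i ↔ ¬ Q i) :
    (f '' {i | i ∈ D ∧ P i}).ncard + (f '' {i | i ∈ D ∧ Q i}).ncard = D.ncard := by
  rw [(hf.mono fun _ h => h.1).ncard_image, (hf.mono fun _ h => h.1).ncard_image,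
    ← Set.ncard_inter_add_ncard_sdiff_eq_ncard D {i | P i} hD]
  congr 2
  ext i
  simp only [Set.mem_ofPred_eq, Set.mem_sdiff]
  exact and_congr_right fun hi => ((hPQ i hi).not_left).symm

section Domains

variable {G : SimpleGraph V} {T W : Set V} {q x y z : V}

def IsCovered (G : SimpleGraph V) (T W : Set V) (x : V) : Prop :=
  IsInteriorPt G T x ∨ IsInteriorPt G W x ∨ x ∈ T ∩ W

lemma not_mem_of_isInteriorPt (hW : IsDomain G W) (hWT : interiorSet G W ⊆ Tᶜ)
    (hx : IsInteriorPt G T x) : x ∉ W := by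
  intro hxW
  rcases hW.2.1 x hxW with hint | ⟨-, -, y, hxy, hy⟩
  · exact hWT hint hx.1
  · exact hWT hy (hx.2 y hxy)

lemma isBoundaryPt_of_mem_inter (hT : IsDomain G T) (hW : IsDomain G W)
    (hWT : interiorSet G W ⊆ Tᶜ) (hx : x ∈ T ∩ W) :
    IsBoundaryPt G T x ∧ IsBoundaryPt G W x :=
  ⟨(hT.2.1 x hx.1).resolve_left fun h => not_mem_of_isInteriorPt hW hWT h hx.2,
    (hW.2.1 x hx.2).resolve_left fun h => hWT h hx.1⟩

lemma not_adj_of_isBoundaryPt (hT : IsDomain G T) (hq : IsBoundaryPt G T q)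
    (hx : IsBoundaryPt G T x) (hy : IsBoundaryPt G T y) (hqx : G.Adj q x) (hqy : G.Adj q y) :
    ¬ G.Adj x y :=
  (hT.2.2.1 q hq).2 x ⟨hx, hqx⟩ y ⟨hy, hqy⟩

lemma not_adj_of_mem_inter (hT : IsDomain G T) (hW : IsDomain G W)
    (hWT : interiorSet G W ⊆ Tᶜ) (hx : x ∈ T ∩ W) (hy : y ∈ T ∩ W) (hz : z ∈ T ∩ W)
    (hxy : G.Adj x y) (hxz : G.Adj x z) : ¬ G.Adj y z :=
  not_adj_of_isBoundaryPt hT (isBoundaryPt_of_mem_inter hT hW hWT hx).1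
    (isBoundaryPt_of_mem_inter hT hW hWT hy).1 (isBoundaryPt_of_mem_inter hT hW hWT hz).1 hxy hxz

lemma mem_and_mem_or_of_isCovered (hx : IsCovered G T W x) (hy : IsCovered G T W y)
    (hxy : G.Adj x y) : (x ∈ T ∧ y ∈ T) ∨ (x ∈ W ∧ y ∈ W) := by
  rcases hx with hx | hx | hx
  · exact .inl ⟨hx.1, hx.2 y hxy⟩
  · exact .inr ⟨hx.1, hx.2 y hxy⟩
  rcases hy with hy | hy | hy
  · exact .inl ⟨hy.2 x hxy.symm, hy.1⟩
  · exact .inr ⟨hy.2 x hxy.symm, hy.1⟩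
  · exact .inl ⟨hx.1, hy.1⟩

end Domains

section Lattice

/-- The six unit vectors of `tri` in cyclic order: consecutive ones are adjacent. -/
def dir : Fin 6 → ℤ × ℤ := ![(1, 0), (0, 1), (-1, 1), (-1, 0), (0, -1), (1, -1)]

instance (v : ℤ × ℤ) : Decidable (v ∈ hexDirs) := by
  unfold hexDirs; infer_instance

instance : DecidableRel tri.Adj := fun p q => inferInstanceAs (Decidable (p - q ∈ hexDirs))

lemma tri_adj_add_add_iff (p u v : ℤ × ℤ) : tri.Adj (p + u) (p + v) ↔ tri.Adj u v := by
  show (p + u) - (p + v) ∈ hexDirs ↔ u - v ∈ hexDirs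
  rw [add_sub_add_left_eq_sub]

lemma tri_adj_self_add_iff (p u : ℤ × ℤ) : tri.Adj p (p + u) ↔ tri.Adj 0 u := by
  simpa using tri_adj_add_add_iff p 0 u

lemma tri_adj_zero_iff (v : ℤ × ℤ) : tri.Adj 0 v ↔ ∃ k, v = dir k := by
  show 0 - v ∈ hexDirs ↔ _
  obtain ⟨a, b⟩ := v
  simp only [hexDirs, zero_sub, Prod.neg_mk, Set.mem_insert_iff, Prod.mk.injEq, neg_eq_zero,
    neg_inj, Set.mem_singleton_iff, dir, Fin.exists_fin_succ, Fin.isValue, Matrix.cons_val_zero,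
    Matrix.cons_val_succ, Matrix.cons_val_fin_one, exists_const]
  omega

lemma tri_adj_iff (x y : ℤ × ℤ) : tri.Adj x y ↔ ∃ k, y = x + dir k := by
  conv_lhs => rw [← add_sub_cancel x y, tri_adj_self_add_iff, tri_adj_zero_iff]
  simp only [sub_eq_iff_eq_add']

lemma adj_add_dir (x : ℤ × ℤ) (k : Fin 6) : tri.Adj x (x + dir k) :=
  (tri_adj_iff _ _).2 ⟨k, rfl⟩

lemma adj_add_dir_iff (x : ℤ × ℤ) (i j : Fin 6) :
    tri.Adj (x + dir i) (x + dir j) ↔ j = i + 1 ∨ j = i - 1 := by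
  rw [tri_adj_add_add_iff]
  revert i j
  decide

lemma adj_add_dir_succ (x : ℤ × ℤ) (i : Fin 6) : tri.Adj (x + dir i) (x + dir (i + 1)) :=
  (adj_add_dir_iff x i _).2 (.inl rfl)

lemma dir_add_two_common_adj : ∀ k t : Fin 6, tri.Adj (dir (k + 2)) (dir k + dir t) →
    dir k + dir t = 0 ∨ dir k + dir t = dir (k + 1) := by
  decide

def oppEdge (x : ℤ × ℤ) (i : Fin 6) : Sym2 (ℤ × ℤ) := s(x + dir i, x + dir (i + 1))

lemma oppEdge_add (p u : ℤ × ℤ) (i : Fin 6) :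
    oppEdge (p + u) i = (oppEdge u i).map (p + ·) := by
  simp [oppEdge, add_assoc]

/-- `(k, i)` indexes the triangle with apex `p + dir k` and opposite edge `oppEdge (p + dir k) i`:
these are the twelve lattice triangles with apex next to `p` whose opposite edge lies at distance
`2` from `p`. -/
def ring2Index : Finset (Fin 6 × Fin 6) := {ki | ki.2 = ki.1 ∨ ki.2 + 1 = ki.1}

lemma card_ring2Index : ring2Index.card = 12 := by
  decide

lemma ring2Index_dist_two : ∀ ki ∈ ring2Index, ∀ j ∈ ({ki.2, ki.2 + 1} : Finset (Fin 6)),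
    dir ki.1 + dir j ≠ 0 ∧ ¬ tri.Adj 0 (dir ki.1 + dir j) := by
  decide

lemma exists_ring2Index_of_adj : ∀ a b c d : Fin 6,
    dir a + dir b ≠ 0 → ¬ tri.Adj 0 (dir a + dir b) →
    dir c + dir d ≠ 0 → ¬ tri.Adj 0 (dir c + dir d) →
    tri.Adj (dir a + dir b) (dir c + dir d) →
    ∃ ki ∈ ring2Index, (ki.1 = a ∨ ki.1 = c) ∧
      s(dir a + dir b, dir c + dir d) = oppEdge (dir ki.1) ki.2 := by
  decide

lemma injOn_oppEdge_dir :
    Set.InjOn (fun ki : Fin 6 × Fin 6 => oppEdge (dir ki.1) ki.2) ring2Index := by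
  have h : ∀ a ∈ ring2Index, ∀ b ∈ ring2Index,
      oppEdge (dir a.1) a.2 = oppEdge (dir b.1) b.2 → a = b := by
    decide
  exact fun a ha b hb => h a ha b hb

end Lattice

section Hole

variable {T W : Set (ℤ × ℤ)} {p q x : ℤ × ℤ}

set_option maxRecDepth 10000 in
set_option synthInstance.maxSize 2000 in
/-- The possible labellings of the hexagon around a common boundary point `q`: `inT k` stands for
`q + dir k ∈ T` and `inner k` for `q + dir k` being interior to `T` or to `W`. -/
lemma hexagon_labelling (inT inner : Fin 6 → Prop)
    (h_isolated : ∀ k, inT k → inT (k + 1) ∨ inT (k - 1))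
    (h_int_T : ∀ k, inT k → inner k → inT (k + 1) ∧ inT (k - 1))
    (h_bdry : ∀ k, inT k → inT (k + 1) → inner k ∨ inner (k + 1))
    (h_fill : ∀ k, inT k → inner k → inT (k + 2) → inner (k + 2) → inner (k + 1))
    (h_W : ∃ k, ¬ inT k ∧ inner k)
    (h_int_W : ∀ k, ¬ inT k → inner k →
      (¬ inT (k + 1) → inner (k + 1)) ∧ (¬ inT (k - 1) → inner (k - 1))) :
    (∀ k, ¬ inT k → inner k) ∧
      ∀ k, inT k → ¬ inner k → ¬ inT (k + 1) ∨ ¬ inT (k - 1) := by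
  have h_bool (P : Fin 6 → Prop) :
      ∃ a0 a1 a2 a3 a4 a5 : Bool, P = fun k => ![a0, a1, a2, a3, a4, a5] k = true := by
    classical
    refine ⟨P 0, P 1, P 2, P 3, P 4, P 5, funext fun k => ?_⟩
    fin_cases k <;> simp
  obtain ⟨a0, a1, a2, a3, a4, a5, rfl⟩ := h_bool inT
  obtain ⟨b0, b1, b2, b3, b4, b5, rfl⟩ := h_bool inner
  clear h_bool
  -- `decide` runs through the `2 ^ 12` Boolean labellings
  revert a0 a1 a2 a3 a4 a5 b0 b1 b2 b3 b4 b5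
  decide

lemma add_dir_succ_mem_or_add_dir_pred_mem (hT : IsDomain tri T) (hq : q ∈ T) {k : Fin 6}
    (hk : q + dir k ∈ T) : q + dir (k + 1) ∈ T ∨ q + dir (k - 1) ∈ T := by
  obtain ⟨⟨y, ⟨hyT, hqy⟩, hky⟩, -⟩ := hT.1 q hq (q + dir k) ⟨hk, adj_add_dir q k⟩
  obtain ⟨l, rfl⟩ := (tri_adj_iff _ _).1 hqy
  rcases (adj_add_dir_iff q k l).1 hky with rfl | rfl
  exacts [.inl hyT, .inr hyT]

lemma isInteriorPt_add_dir_succ (hT : IsDomain tri T) (hq : IsBoundaryPt tri T q) {k : Fin 6}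
    (h0 : IsInteriorPt tri T (q + dir k)) (h2 : IsInteriorPt tri T (q + dir (k + 2))) :
    IsInteriorPt tri T (q + dir (k + 1)) := by
  have hsep : ∀ k : Fin 6, dir k ≠ dir (k + 2) ∧ ¬ (k + 2 = k + 1 ∨ k + 2 = k - 1) := by
    decide
  rcases hT.2.2.2 _ _ h0 h2 (by simpa using (hsep k).1)
      ⟨q, hq, (adj_add_dir q k).symm, (adj_add_dir q (k + 2)).symm⟩
    with hadj | ⟨r, hr, -, -, h0r, h2r⟩
  · exact absurd ((adj_add_dir_iff q _ _).1 hadj) (hsep k).2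
  · obtain ⟨t, rfl⟩ := (tri_adj_iff _ _).1 h0r
    rw [add_assoc, tri_adj_add_add_iff] at h2r
    rcases dir_add_two_common_adj k t h2r with h | h
    · rw [add_assoc, h, add_zero] at hr
      exact absurd hr hq.2.1
    · rwa [add_assoc, h] at hr

lemma isCovered_of_adj (hT : IsDomain tri T) (hW : IsHole tri T W)
    (hqT : IsBoundaryPt tri T q) (hqW : IsBoundaryPt tri W q) (hqx : tri.Adj q x) :
    IsCovered tri T W x := by
  obtain ⟨-, -, -, ⟨-, hWT, -, hcomp⟩, -⟩ := hW
  have innerT : ∀ {y}, y ∈ T →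
      (IsInteriorPt tri T y ∨ IsInteriorPt tri W y ↔ IsInteriorPt tri T y) :=
    fun hy => or_iff_left fun h => hWT h hy
  have innerW : ∀ {y}, y ∉ T →
      (IsInteriorPt tri T y ∨ IsInteriorPt tri W y ↔ IsInteriorPt tri W y) :=
    fun hy => or_iff_right fun h => hy h.1
  have adj_pred (k : Fin 6) : tri.Adj (q + dir k) (q + dir (k - 1)) :=
    (adj_add_dir_iff q k _).2 (.inr rfl)
  obtain ⟨hout, hend⟩ := hexagon_labelling (fun k => q + dir k ∈ T)
    (fun k => IsInteriorPt tri T (q + dir k) ∨ IsInteriorPt tri W (q + dir k))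
    (fun _ => add_dir_succ_mem_or_add_dir_pred_mem hT hqT.1)
    (fun k hk hi => ⟨((innerT hk).1 hi).2 _ (adj_add_dir_succ q k),
      ((innerT hk).1 hi).2 _ (adj_pred k)⟩)
    (fun k hk hk1 => by
      by_contra h
      obtain ⟨h0, h1⟩ := not_or.1 h
      exact not_adj_of_isBoundaryPt hT hqT ((hT.2.1 _ hk).resolve_left fun hi => h0 (.inl hi))
        ((hT.2.1 _ hk1).resolve_left fun hi => h1 (.inl hi)) (adj_add_dir q k)
        (adj_add_dir q (k + 1)) (adj_add_dir_succ q k))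
    (fun k hk hi hk2 hi2 =>
      .inl (isInteriorPt_add_dir_succ hT hqT ((innerT hk).1 hi) ((innerT hk2).1 hi2)))
    (by
      obtain ⟨-, -, y, hqy, hy⟩ := hqW
      obtain ⟨k, rfl⟩ := (tri_adj_iff _ _).1 hqy
      exact ⟨k, hWT hy, .inr hy⟩)
    (fun k hk hi => ⟨fun hl => .inr (hcomp _ ((innerW hk).1 hi) _ hl (adj_add_dir_succ q k)),
      fun hl => .inr (hcomp _ ((innerW hk).1 hi) _ hl (adj_pred k))⟩)
  obtain ⟨k, rfl⟩ := (tri_adj_iff q x).1 hqx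
  by_cases hk : q + dir k ∈ T
  · by_cases hi : IsInteriorPt tri T (q + dir k)
    · exact .inl hi
    -- a boundary point of `T` next to `q` is an end of the arc, hence next to `int W`
    refine .inr (.inr ⟨hk, ?_⟩)
    rcases hend k hk fun h => hi ((innerT hk).1 h) with h | h
    · exact ((innerW h).1 (hout _ h)).2 _ (adj_add_dir_succ q k).symm
    · exact ((innerW h).1 (hout _ h)).2 _ (by simpa using adj_add_dir_succ q (k - 1))
  · exact .inr (.inl ((innerW hk).1 (hout k hk)))

def FaceIn (S : Set (ℤ × ℤ)) (x : ℤ × ℤ) (i : Fin 6) : Prop :=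
  x ∈ S ∧ x + dir i ∈ S ∧ x + dir (i + 1) ∈ S

lemma faceIn_iff_not_faceIn (hT : IsDomain tri T) (hW : IsHole tri T W)
    (hx : IsCovered tri T W x) (i : Fin 6) : FaceIn W x i ↔ ¬ FaceIn T x i := by
  have hWdom : IsDomain tri W := hW.2.1.1
  have hWT : interiorSet tri W ⊆ Tᶜ := hW.2.2.2.1.2.1
  constructor
  · rintro ⟨hW0, hW1, hW2⟩ ⟨hT0, hT1, hT2⟩
    exact not_adj_of_mem_inter hT hWdom hWT ⟨hT0, hW0⟩ ⟨hT1, hW1⟩ ⟨hT2, hW2⟩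
      (adj_add_dir x i) (adj_add_dir x (i + 1)) (adj_add_dir_succ x i)
  · intro hnT
    rcases hx with h | h | h
    · exact absurd ⟨h.1, h.2 _ (adj_add_dir x i), h.2 _ (adj_add_dir x (i + 1))⟩ hnT
    · exact ⟨h.1, h.2 _ (adj_add_dir x i), h.2 _ (adj_add_dir x (i + 1))⟩
    · obtain ⟨hxT, hxW⟩ := isBoundaryPt_of_mem_inter hT hWdom hWT h
      rcases mem_and_mem_or_of_isCovered (isCovered_of_adj hT hW hxT hxW (adj_add_dir x i))
        (isCovered_of_adj hT hW hxT hxW (adj_add_dir x (i + 1))) (adj_add_dir_succ x i)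
        with ⟨h1, h2⟩ | ⟨h1, h2⟩
      exacts [absurd ⟨h.1, h1, h2⟩ hnT, ⟨h.2, h1, h2⟩]

lemma sphEdges_one_eq {S : Set (ℤ × ℤ)} (hp : p ∈ S) :
    sphEdges tri S p 1 = oppEdge p '' {i | FaceIn S p i} := by
  ext e
  constructor
  · rintro ⟨x, y, rfl, hx, hy, hxy⟩
    rw [mem_sphVerts_one hp] at hx hy
    obtain ⟨i, rfl⟩ := (tri_adj_iff p x).1 hx.2
    obtain ⟨j, rfl⟩ := (tri_adj_iff p y).1 hy.2
    rcases (adj_add_dir_iff p i j).1 hxy with rfl | rfl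
    · exact ⟨i, ⟨hp, hx.1, hy.1⟩, rfl⟩
    · refine ⟨i - 1, ⟨hp, hy.1, by rw [sub_add_cancel]; exact hx.1⟩, ?_⟩
      rw [oppEdge, sub_add_cancel, Sym2.eq_swap]
  · rintro ⟨i, ⟨-, h1, h2⟩, rfl⟩
    exact ⟨_, _, rfl, (mem_sphVerts_one hp).2 ⟨h1, adj_add_dir p i⟩,
      (mem_sphVerts_one hp).2 ⟨h2, adj_add_dir p (i + 1)⟩, adj_add_dir_succ p i⟩

lemma sphEdges_two_eq {S : Set (ℤ × ℤ)} (hp : p ∈ S) :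
    sphEdges tri S p 2 = (fun ki => oppEdge (p + dir ki.1) ki.2) ''
      {ki | ki ∈ ring2Index ∧ FaceIn S (p + dir ki.1) ki.2} := by
  ext e
  constructor
  · rintro ⟨x, y, rfl, hx, hy, hxy⟩
    obtain ⟨hxS, hxp, hpx, mx, hmxS, hpmx, hmx⟩ := (mem_sphVerts_two hp).1 hx
    obtain ⟨hyS, hyp, hpy, my, hmyS, hpmy, hmy⟩ := (mem_sphVerts_two hp).1 hy
    obtain ⟨a, rfl⟩ := (tri_adj_iff _ _).1 hpmx
    obtain ⟨b, rfl⟩ := (tri_adj_iff _ _).1 hmx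
    obtain ⟨c, rfl⟩ := (tri_adj_iff _ _).1 hpmy
    obtain ⟨d, rfl⟩ := (tri_adj_iff _ _).1 hmy
    rw [add_assoc, Ne, add_eq_left] at hxp hyp
    rw [add_assoc, tri_adj_self_add_iff] at hpx hpy
    rw [add_assoc, add_assoc, tri_adj_add_add_iff] at hxy
    obtain ⟨ki, hki, hk, he⟩ := exists_ring2Index_of_adj a b c d hxp hpx hyp hpy hxy
    have hedge : s(p + dir a + dir b, p + dir c + dir d) = oppEdge (p + dir ki.1) ki.2 := by
      rw [oppEdge_add, ← he, Sym2.map_mk, add_assoc, add_assoc]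
    have hmem : ∀ z ∈ oppEdge (p + dir ki.1) ki.2, z ∈ S := by
      rw [← hedge]
      intro z hz
      rcases Sym2.mem_iff.1 hz with rfl | rfl
      exacts [hxS, hyS]
    refine ⟨ki, ⟨hki, ?_, hmem _ (Sym2.mem_mk_left _ _), hmem _ (Sym2.mem_mk_right _ _)⟩,
      hedge.symm⟩
    rcases hk with h | h <;> rw [h]
    exacts [hmxS, hmyS]
  · rintro ⟨⟨k, i⟩, ⟨hki, hk, h1, h2⟩, rfl⟩
    have hdist (j : Fin 6) (hj : j ∈ ({i, i + 1} : Finset (Fin 6)))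
        (hjS : p + dir k + dir j ∈ S) : p + dir k + dir j ∈ sphVerts tri S p 2 := by
      obtain ⟨hne, hnadj⟩ := ring2Index_dist_two (k, i) hki j hj
      refine (mem_sphVerts_two hp).2 ⟨hjS, ?_, ?_, _, hk, adj_add_dir p k, adj_add_dir _ j⟩
      · rwa [add_assoc, Ne, add_eq_left]
      · rwa [add_assoc, tri_adj_self_add_iff]
    exact ⟨_, _, rfl, hdist i (by simp) h1, hdist (i + 1) (by simp) h2, adj_add_dir_succ _ i⟩

lemma arcLen_one_add_arcLen_one (hT : IsDomain tri T) (hW : IsHole tri T W)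
    (hpT : IsBoundaryPt tri T p) (hpW : IsBoundaryPt tri W p) :
    arcLen tri W p 1 + arcLen tri T p 1 = 6 := by
  have hinj : Set.InjOn (oppEdge p) Set.univ := by
    intro i _ j _ h
    rw [← add_zero p, oppEdge_add, oppEdge_add] at h
    exact (by decide : ∀ i j : Fin 6, oppEdge 0 i = oppEdge 0 j → i = j) i j
      (Sym2.map.injective (add_right_injective p) h)
  have := ncard_image_add_ncard_image Set.finite_univ hinj
    fun i _ => faceIn_iff_not_faceIn hT hW (.inr (.inr ⟨hpT.1, hpW.1⟩)) i
  simpa [arcLen, sphEdges_one_eq hpW.1, sphEdges_one_eq hpT.1] using this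

lemma arcLen_two_add_arcLen_two (hT : IsDomain tri T) (hW : IsHole tri T W)
    (hpT : IsBoundaryPt tri T p) (hpW : IsBoundaryPt tri W p) :
    arcLen tri W p 2 + arcLen tri T p 2 = 12 := by
  have hinj : Set.InjOn (fun ki : Fin 6 × Fin 6 => oppEdge (p + dir ki.1) ki.2) ring2Index := by
    intro a ha b hb h
    simp only [oppEdge_add] at h
    exact injOn_oppEdge_dir ha hb (Sym2.map.injective (add_right_injective p) h)
  have := ncard_image_add_ncard_image ring2Index.finite_toSet hinj
    fun ki _ =>
      faceIn_iff_not_faceIn hT hW (isCovered_of_adj hT hW hpT hpW (adj_add_dir p ki.1)) ki.2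
  rw [Set.ncard_coe_finset, card_ring2Index] at this
  simpa [arcLen, sphEdges_two_eq hpW.1, sphEdges_two_eq hpT.1] using this

end Hole

/-- hole cancellation: at a common boundary point of a smooth domain
`G` and one of its holes `W`, the sphere arc lengths add up to `6` resp. `12` and
the curvatures cancel: `K_W(p) + K_G(p) = 0`. -/
theorem hole_curvature_cancellation (T W : Set (ℤ × ℤ))
    (hT : IsSmoothDomain tri T) (hW : IsHole tri T W) :
    ∀ p ∈ boundarySet tri T ∩ boundarySet tri W,
      arcLen tri W p 1 + arcLen tri T p 1 = 6 ∧
      arcLen tri W p 2 + arcLen tri T p 2 = 12 ∧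
      curv tri W p + curv tri T p = 0 := by
  rintro p ⟨hpT, hpW⟩
  have h1 := arcLen_one_add_arcLen_one hT.1 hW hpT hpW
  have h2 := arcLen_two_add_arcLen_two hT.1 hW hpT hpW
  refine ⟨h1, h2, ?_⟩
  simp only [curv]
  omega

end TriGB
end

section
/- Pruning and etching preserve the Euler characteristic: if G is a finite smooth domain in the triangular lattice with interior set H, and p is an interior point removed by a pruning step (p is 1-dimensional in H and is an end point of a branch of H) or by an etching step (p is 2-dimensional in H and lies on an end ridge) such that the graph G′ determined by the interior set H \ {p} (the union of radius-1 balls in X around the points of H \ {p}) is again a smooth domain, then χ(G′) = χ(G). -/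
/-!
Common framework: subgraphs of an ambient simple graph are modelled as vertex sets
with the induced graph structure (this captures condition (iv): domains are induced
subgraphs). Spheres, curvature, interior/boundary points, domains, smooth domains,
simple connectivity, Euler characteristic, and the triangular lattice `tri`.
-/

namespace TriGB

variable {V : Type*}

/-- `p` is a one-dimensional point of `H`: its unit sphere within `H` is nonempty
and edgeless. -/
def OneDimPtIn (G : SimpleGraph V) (H : Set V) (p : V) : Prop :=
  p ∈ H ∧ (nbrs G H p).Nonempty ∧ ∀ q ∈ nbrs G H p, ∀ r ∈ nbrs G H p, ¬ G.Adj q r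

/-- `p` is a two-dimensional point of `H`: its unit sphere within `H` is a (nonempty)
one-dimensional graph. -/
def TwoDimPtIn (G : SimpleGraph V) (H : Set V) (p : V) : Prop :=
  p ∈ H ∧ (nbrs G H p).Nonempty ∧ OneDimSet G (nbrs G H p)

/-- The connected component of `p` in the subgraph induced on `A`. -/
def componentOf (G : SimpleGraph V) (A : Set V) (p : V) : Set V :=
  {q | q ∈ A ∧ (restrict G A).Reachable p q}

/-- The one-dimensional points of `H`. -/
def H1set (G : SimpleGraph V) (H : Set V) : Set V := {q | OneDimPtIn G H q}

/-- The two-dimensional points of `H`. -/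
def H2set (G : SimpleGraph V) (H : Set V) : Set V := {q | TwoDimPtIn G H q}

/-- A branch of `H`: a connected component of the one-dimensional points containing a
point with exactly one neighbour in `H`. -/
def IsBranch (G : SimpleGraph V) (H B : Set V) : Prop :=
  (∃ p ∈ H1set G H, B = componentOf G (H1set G H) p) ∧ ∃ q ∈ B, (nbrs G H q).ncard = 1

/-- A bridge of `H`: a connected component of the one-dimensional points which is not
a branch. -/
def IsBridge (G : SimpleGraph V) (H B : Set V) : Prop :=
  (∃ p ∈ H1set G H, B = componentOf G (H1set G H) p) ∧ ¬ ∃ q ∈ B, (nbrs G H q).ncard = 1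

/-- A ridge of `H`: a connected component of the two-dimensional points of `H`. -/
def IsRidge (G : SimpleGraph V) (H R : Set V) : Prop :=
  ∃ p ∈ H2set G H, R = componentOf G (H2set G H) p

/-- An end ridge: a ridge to which at most one bridge is attached. -/
def IsEndRidge (G : SimpleGraph V) (H R : Set V) : Prop :=
  IsRidge G H R ∧ {B : Set V | IsBridge G H B ∧ ∃ a ∈ B, ∃ b ∈ R, G.Adj a b}.ncard ≤ 1

/-- `p` is removed by a pruning step: `p` is one-dimensional in `H` and an end point
of a branch of `H` (it has exactly one neighbour in `H`). -/
def PruningPt (G : SimpleGraph V) (H : Set V) (p : V) : Prop :=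
  OneDimPtIn G H p ∧ (∃ B, IsBranch G H B ∧ p ∈ B) ∧ (nbrs G H p).ncard = 1

/-- `p` is removed by an etching step: `p` is two-dimensional in `H` and lies on an
end ridge of `H`. -/
def EtchingPt (G : SimpleGraph V) (H : Set V) (p : V) : Prop :=
  TwoDimPtIn G H p ∧ ∃ R, IsEndRidge G H R ∧ p ∈ R

/-!
A vertex of the domain that disappears when `p` leaves the interior is a boundary point whose
only interior neighbour is `p`. Two-dimensionality at such a vertex and one-dimensionality
of the boundary force all its neighbours into `B₁(p)`. So the deleted vertices lie in the
open star of `p` with their links inside the closed star: each deleted edge not through `p`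
spans a deleted face with `p`, and since the lattice contains no `K₄`, every deleted face
arises this way. Deleted vertices, edges and faces therefore cancel in `v - e + f`.
-/

section Collapse

variable {G : SimpleGraph V} {T S : Set V} {p : V}

lemma edgesOf_finite (hT : T.Finite) : (edgesOf G T).Finite := by
  refine ((hT.prod hT).image fun x : V × V => s(x.1, x.2)).subset ?_
  rintro e ⟨a, b, rfl, ha, hb, -⟩
  exact ⟨(a, b), ⟨ha, hb⟩, rfl⟩

lemma facesOf_finite (hT : T.Finite) : (facesOf G T).Finite :=
  hT.toFinset.powerset.finite_toSet.subset fun t ht => by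
    simpa [Finset.mem_powerset] using ht.2.1

lemma mem_facesOf_iff {t : Finset V} : t ∈ facesOf G T ↔ G.IsNClique 3 t ∧ ↑t ⊆ T :=
  ⟨fun ⟨hcard, htT, hadj⟩ => ⟨⟨fun _ hx _ hy => hadj _ hx _ hy, hcard⟩, htT⟩,
    fun ⟨⟨hadj, hcard⟩, htT⟩ => ⟨hcard, htT, fun _ hx _ hy => hadj hx hy⟩⟩

def edgesMeeting (G : SimpleGraph V) (T S : Set V) : Set (Sym2 V) :=
  {e | e ∈ edgesOf G T ∧ ∃ a ∈ S, a ∈ e}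

def facesMeeting (G : SimpleGraph V) (T S : Set V) : Set (Finset V) :=
  {t | t ∈ facesOf G T ∧ ∃ a ∈ S, a ∈ t}

lemma edgesOf_diff : edgesOf G (T \ S) = edgesOf G T \ edgesMeeting G T S := by
  ext e
  constructor
  · rintro ⟨a, b, rfl, ha, hb, hab⟩
    refine ⟨⟨a, b, rfl, ha.1, hb.1, hab⟩, ?_⟩
    rintro ⟨-, x, hx, hxe⟩
    rcases Sym2.mem_iff.1 hxe with rfl | rfl
    exacts [ha.2 hx, hb.2 hx]
  · rintro ⟨⟨a, b, rfl, ha, hb, hab⟩, hmeet⟩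
    refine ⟨a, b, rfl, ⟨ha, fun haS => hmeet ?_⟩, ⟨hb, fun hbS => hmeet ?_⟩, hab⟩
    exacts [⟨⟨a, b, rfl, ha, hb, hab⟩, a, haS, Sym2.mem_mk_left a b⟩,
      ⟨⟨a, b, rfl, ha, hb, hab⟩, b, hbS, Sym2.mem_mk_right a b⟩]

lemma facesOf_diff : facesOf G (T \ S) = facesOf G T \ facesMeeting G T S := by
  ext t
  constructor
  · rintro ⟨hcard, hsub, hadj⟩
    exact ⟨⟨hcard, hsub.trans Set.sdiff_subset, hadj⟩, fun ⟨_, x, hx, hxt⟩ => (hsub hxt).2 hx⟩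
  · rintro ⟨⟨hcard, hsub, hadj⟩, hmeet⟩
    exact ⟨hcard, fun x hxt => ⟨hsub hxt, fun hx => hmeet ⟨⟨hcard, hsub, hadj⟩, x, hx, hxt⟩⟩, hadj⟩

lemma edgesMeeting_inter_eq_image (hST : S ⊆ T) (hp : p ∈ T) (hpS : p ∉ S)
    (hS : S ⊆ G.neighborSet p) :
    edgesMeeting G T S ∩ {e | p ∈ e} = (fun b => s(p, b)) '' S := by
  ext e
  constructor
  · rintro ⟨⟨-, a, haS, hae⟩, hpe⟩
    exact ⟨a, haS, ((Sym2.mem_and_mem_iff (ne_of_mem_of_not_mem haS hpS).symm).1 ⟨hpe, hae⟩).symm⟩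
  · rintro ⟨b, hb, rfl⟩
    exact ⟨⟨⟨p, b, rfl, hp, hST hb, hS hb⟩, b, hb, Sym2.mem_mk_right p b⟩, Sym2.mem_mk_left p b⟩

lemma ncard_edgesMeeting_inter (hST : S ⊆ T) (hp : p ∈ T) (hpS : p ∉ S)
    (hS : S ⊆ G.neighborSet p) :
    (edgesMeeting G T S ∩ {e | p ∈ e}).ncard = S.ncard := by
  rw [edgesMeeting_inter_eq_image hST hp hpS hS]
  exact Set.InjOn.ncard_image fun a _ b _ h => Sym2.congr_right.1 h

lemma mk_mem_edgesOf_iff {a b : V} : s(a, b) ∈ edgesOf G T ↔ a ∈ T ∧ b ∈ T ∧ G.Adj a b := by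
  constructor
  · rintro ⟨x, y, h, hx, hy, hxy⟩
    rcases Sym2.eq_iff.1 h with ⟨rfl, rfl⟩ | ⟨rfl, rfl⟩
    exacts [⟨hx, hy, hxy⟩, ⟨hy, hx, hxy.symm⟩]
  · exact fun ⟨ha, hb, hab⟩ => ⟨a, b, rfl, ha, hb, hab⟩

lemma injOn_insert_toFinset [DecidableEq V] :
    Set.InjOn (fun e : Sym2 V => insert p e.toFinset) {e | p ∉ e} := by
  intro e he e' he' h
  refine Sym2.ext fun x => ?_
  have hx := Finset.ext_iff.1 h x
  simp only [Finset.mem_insert, Sym2.mem_toFinset] at hx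
  by_cases hxp : x = p
  · subst hxp
    exact iff_of_false he he'
  · simpa [hxp] using hx

variable [DecidableEq V]

lemma facesMeeting_eq_image (hG : G.CliqueFree 4) (hp : p ∈ T) (hpS : p ∉ S)
    (hS : S ⊆ G.neighborSet p) (hlink : ∀ b ∈ S, nbrs G T b ⊆ ball1 G p) :
    facesMeeting G T S =
      (fun e => insert p e.toFinset) '' (edgesMeeting G T S \ {e | p ∈ e}) := by
  ext t
  constructor
  · rintro ⟨ht, a, haS, hat⟩
    obtain ⟨hclique, htT⟩ := mem_facesOf_iff.1 ht
    have hpt : p ∈ t := by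
      by_contra hpt
      refine hG (insert p t) (hclique.insert (a := p) fun x hx => ?_)
      by_cases hxa : x = a
      · exact hxa ▸ hS haS
      · rcases hlink a haS ⟨htT hx, hclique.1 hat hx (Ne.symm hxa)⟩ with rfl | hpx
        exacts [absurd hx hpt, hpx]
    obtain ⟨u, v, huv, hpair⟩ := Finset.card_eq_two.1
      (by rw [Finset.card_erase_of_mem hpt, hclique.2] : (t.erase p).card = 2)
    have hu : u ∈ t.erase p := hpair ▸ Finset.mem_insert_self u {v}
    have hv : v ∈ t.erase p := hpair ▸ Finset.mem_insert_of_mem (Finset.mem_singleton_self v)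
    have ha : a ∈ ({u, v} : Finset V) :=
      hpair ▸ Finset.mem_erase.2 ⟨ne_of_mem_of_not_mem haS hpS, hat⟩
    refine ⟨s(u, v), ⟨⟨mk_mem_edgesOf_iff.2 ⟨htT (Finset.mem_of_mem_erase hu),
      htT (Finset.mem_of_mem_erase hv), hclique.1 (Finset.mem_of_mem_erase hu)
      (Finset.mem_of_mem_erase hv) huv⟩, a, haS, by simpa using ha⟩, ?_⟩, ?_⟩
    · intro hpe
      rcases Sym2.mem_iff.1 hpe with rfl | rfl
      exacts [Finset.ne_of_mem_erase hu rfl, Finset.ne_of_mem_erase hv rfl]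
    · simp only [Sym2.toFinset_mk_eq, ← hpair, Finset.insert_erase hpt]
  · rintro ⟨e, ⟨⟨he, a, haS, hae⟩, hpe⟩, rfl⟩
    obtain ⟨w, rfl⟩ : ∃ w, e = s(a, w) := ⟨Sym2.Mem.other hae, (Sym2.other_spec hae).symm⟩
    obtain ⟨haT, hwT, haw⟩ := mk_mem_edgesOf_iff.1 he
    have hwp : w ≠ p := fun h => hpe (h ▸ Sym2.mem_mk_right a w)
    have hpw : G.Adj p w := (hlink a haS ⟨hwT, haw⟩).resolve_left hwp
    refine ⟨mem_facesOf_iff.2 ⟨?_, ?_⟩, a, haS, by simp⟩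
    · simpa [Sym2.toFinset_mk_eq] using
        SimpleGraph.is3Clique_triple_iff.2 ⟨hS haS, hpw, haw⟩
    · simp [Sym2.toFinset_mk_eq, Set.insert_subset_iff, hp, haT, hwT]

theorem euler_sdiff_eq (hG : G.CliqueFree 4) (hT : T.Finite) (hST : S ⊆ T) (hp : p ∈ T)
    (hpS : p ∉ S) (hS : S ⊆ G.neighborSet p) (hlink : ∀ b ∈ S, nbrs G T b ⊆ ball1 G p) :
    euler G (T \ S) = euler G T := by
  have hV : (T \ S).ncard + S.ncard = T.ncard := Set.ncard_sdiff_add_ncard_of_subset hST hT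
  have hE : (edgesOf G (T \ S)).ncard + (edgesMeeting G T S).ncard = (edgesOf G T).ncard := by
    rw [edgesOf_diff]
    exact Set.ncard_sdiff_add_ncard_of_subset (fun e he => he.1) (edgesOf_finite hT)
  have hF : (facesOf G (T \ S)).ncard + (facesMeeting G T S).ncard = (facesOf G T).ncard := by
    rw [facesOf_diff]
    exact Set.ncard_sdiff_add_ncard_of_subset (fun t ht => ht.1) (facesOf_finite hT)
  have hES : S.ncard + (edgesMeeting G T S \ {e | p ∈ e}).ncard = (edgesMeeting G T S).ncard := by
    rw [← ncard_edgesMeeting_inter hST hp hpS hS]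
    exact Set.ncard_inter_add_ncard_sdiff_eq_ncard _ _
      ((edgesOf_finite hT).subset fun e he => he.1)
  have hFS : (facesMeeting G T S).ncard = (edgesMeeting G T S \ {e | p ∈ e}).ncard := by
    rw [facesMeeting_eq_image hG hp hpS hS hlink]
    exact (injOn_insert_toFinset.mono fun e he => he.2).ncard_image
  unfold euler
  omega

end Collapse

lemma eq_of_mem_ball1_of_notMem_biUnion {G : SimpleGraph V} {A : Set V} {p c b : V}
    (hb : b ∉ ⋃ q ∈ A \ {p}, ball1 G q) (hc : c ∈ A) (hbc : b ∈ ball1 G c) : c = p := by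
  by_contra hcp
  exact hb (Set.mem_biUnion ⟨hc, hcp⟩ hbc)

lemma IsBoundaryPt.adj_of_interior_adj_eq {G : SimpleGraph V} {T : Set V} {p b : V}
    (hb : IsBoundaryPt G T b) (hbp : ∀ q, IsInteriorPt G T q → G.Adj b q → q = p) :
    G.Adj p b := by
  obtain ⟨q, hbq, hq⟩ := hb.2.2
  exact hbp q hq hbq ▸ hbq.symm

lemma IsInteriorPt.ball1_subset {G : SimpleGraph V} {T : Set V} {q : V}
    (hq : IsInteriorPt G T q) : ball1 G q ⊆ T :=
  Set.insert_subset hq.1 hq.2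

section Lattice

/-- `hexDirs` as a `Finset`, so that finite statements about directions are decidable. -/
def hexDirFinset : Finset (ℤ × ℤ) := {(1, 0), (-1, 0), (0, 1), (0, -1), (1, -1), (-1, 1)}

lemma tri_adj_iff_s19 {a b : ℤ × ℤ} : tri.Adj a b ↔ b - a ∈ hexDirFinset := by
  rw [tri.adj_comm]
  show b - a ∈ hexDirs ↔ _
  simp [hexDirs, hexDirFinset]

lemma tri_cliqueFree_four : tri.CliqueFree 4 := by
  have key : ∀ x ∈ hexDirFinset, ∀ y ∈ hexDirFinset, ∀ z ∈ hexDirFinset,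
      y - x ∈ hexDirFinset → z - x ∈ hexDirFinset → z - y ∈ hexDirFinset → False := by
    decide
  intro s hs
  obtain ⟨a, t, hat, rfl, ht⟩ := Finset.card_eq_succ.1 hs.card_eq
  obtain ⟨x, y, z, hxy, hxz, hyz, rfl⟩ := Finset.card_eq_three.1 ht
  have hadj : ∀ u ∈ (insert a {x, y, z} : Finset (ℤ × ℤ)),
      ∀ v ∈ (insert a {x, y, z} : Finset (ℤ × ℤ)), u ≠ v → v - u ∈ hexDirFinset :=
    fun u hu v hv huv => tri_adj_iff_s19.1 (hs.1 (Finset.mem_coe.2 hu) (Finset.mem_coe.2 hv) huv)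
  have hna : ∀ u ∈ ({x, y, z} : Finset (ℤ × ℤ)), u - a ∈ hexDirFinset := fun u hu =>
    hadj a (Finset.mem_insert_self a _) u (Finset.mem_insert_of_mem hu)
      (ne_of_mem_of_not_mem hu hat).symm
  refine key _ (hna x (by simp)) _ (hna y (by simp)) _ (hna z (by simp)) ?_ ?_ ?_ <;>
    rw [sub_sub_sub_cancel_right] <;> exact hadj _ (by simp) _ (by simp) ‹_›

lemma tri_exists_common_adj {p b c : ℤ × ℤ} (hpb : tri.Adj p b) (hbc : tri.Adj b c)
    (hcp : c ≠ p) (hpc : ¬ tri.Adj p c) (hc : c - b ≠ b - p) :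
    ∃ f, tri.Adj p f ∧ tri.Adj b f ∧ tri.Adj f c := by
  have key : ∀ d ∈ hexDirFinset, ∀ e ∈ hexDirFinset, d + e ∉ hexDirFinset → d + e ≠ 0 →
      e ≠ d → ∃ w ∈ hexDirFinset, w - d ∈ hexDirFinset ∧ d + e - w ∈ hexDirFinset := by
    decide
  rw [tri_adj_iff_s19] at hpb hbc hpc
  obtain ⟨w, hw, hwb, hwc⟩ := key _ hpb _ hbc (by simpa using hpc)
    (by simpa [sub_eq_zero] using hcp) hc
  refine ⟨p + w, ?_, ?_, ?_⟩ <;> rw [tri_adj_iff_s19]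
  · simpa using hw
  · convert hwb using 1; abel
  · convert hwc using 1; abel

lemma tri_notMem_ball1_of_adj_of_adj {p b x : ℤ × ℤ} (hpb : tri.Adj p b)
    (hbx : tri.Adj b x) (hxc : tri.Adj x (b + (b - p))) : x ∉ ball1 tri p := by
  have key : ∀ d ∈ hexDirFinset, ∀ u ∈ hexDirFinset, d - u ∈ hexDirFinset →
      d + u ≠ 0 ∧ d + u ∉ hexDirFinset := by
    decide
  rw [tri_adj_iff_s19] at hpb hbx hxc
  obtain ⟨hne, hnadj⟩ := key _ hpb _ hbx (by convert hxc using 1; abel)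
  rintro (rfl | hpx)
  · exact hne (by abel)
  · exact hnadj (by convert tri_adj_iff_s19.1 hpx using 1; abel)

lemma IsDomain.nbrs_subset_ball1 {T : Set (ℤ × ℤ)} (hT : IsDomain tri T) {p b : ℤ × ℤ}
    (hp : IsInteriorPt tri T p) (hb : IsBoundaryPt tri T b)
    (hbp : ∀ q, IsInteriorPt tri T q → tri.Adj b q → q = p) : nbrs tri T b ⊆ ball1 tri p := by
  have hpb : tri.Adj p b := hb.adj_of_interior_adj_eq hbp
  have hbdry : ∀ x ∈ nbrs tri T b, x ≠ p → x ∈ nbrs tri (boundarySet tri T) b := fun x hx hxp =>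
    ⟨(hT.2.1 x hx.1).resolve_left fun hint => hxp (hbp x hint hx.2), hx.2⟩
  -- Otherwise a common neighbour `f` of `p`, `b`, `c` and `c` itself would be adjacent
  -- boundary points in the sphere of `b`.
  have hoff : ∀ c ∈ nbrs tri T b, c - b ≠ b - p → c ∈ ball1 tri p := by
    intro c hc hcb
    by_contra hcp
    simp only [ball1, Set.mem_insert_iff, SimpleGraph.mem_neighborSet, not_or] at hcp
    obtain ⟨f, hpf, hbf, hfc⟩ := tri_exists_common_adj hpb hc.2 hcp.1 hcp.2 hcb
    exact (hT.2.2.1 b hb).2 f (hbdry f ⟨hp.2 f hpf, hbf⟩ hpf.ne') c (hbdry c hc hcp.1) hfc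
  intro c hc
  by_cases hcb : c - b = b - p
  · -- `c` lies straight beyond `b`; a common neighbour of `b` and `c` in `T` (it exists
    -- by two-dimensionality at `b`) is then off that ray and outside `B₁(p)`.
    exfalso
    obtain ⟨x, hx, hcx⟩ := ((hT.1 b hb.1) c hc).1
    have hc' : c = b + (b - p) := by rw [← hcb]; abel
    refine tri_notMem_ball1_of_adj_of_adj hpb hx.2 (hc' ▸ hcx.symm) (hoff x hx fun hxb => ?_)
    exact hcx.ne (by rw [hc', ← hxb]; abel)
  · exact hoff c hc hcb

end Lattice

theorem prune_etch_preserve_euler_general (T : Set (ℤ × ℤ)) (hfin : T.Finite)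
    (hsm : IsSmoothDomain tri T) (p : ℤ × ℤ) (hp : IsInteriorPt tri T p)
    (hstep : PruningPt tri (interiorSet tri T) p ∨ EtchingPt tri (interiorSet tri T) p) :
    euler tri (⋃ q ∈ interiorSet tri T \ {p}, ball1 tri q) = euler tri T := by
  set T' := ⋃ q ∈ interiorSet tri T \ {p}, ball1 tri q
  have hT'T : T' ⊆ T := Set.iUnion₂_subset fun _ hq => hq.1.ball1_subset
  obtain ⟨q, hq, hpq⟩ : (nbrs tri (interiorSet tri T) p).Nonempty :=
    hstep.elim (fun h => h.1.2.1) (fun h => h.1.2.1)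
  have hpT' : p ∈ T' := Set.mem_biUnion ⟨hq, hpq.ne'⟩ (Set.mem_insert_of_mem _ hpq.symm)
  have hsole : ∀ b ∈ T \ T', ∀ q, IsInteriorPt tri T q → tri.Adj b q → q = p :=
    fun b hb q hq hbq =>
      eq_of_mem_ball1_of_notMem_biUnion hb.2 hq (Set.mem_insert_of_mem _ hbq.symm)
  have hbdry : ∀ b ∈ T \ T', IsBoundaryPt tri T b := fun b hb =>
    (hsm.1.2.1 b hb.1).resolve_left fun hint =>
      hb.2 (eq_of_mem_ball1_of_notMem_biUnion hb.2 hint (Set.mem_insert b _) ▸ hpT')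
  rw [← Set.sdiff_sdiff_cancel_left hT'T]
  refine euler_sdiff_eq tri_cliqueFree_four hfin Set.sdiff_subset hp.1 (fun h => h.2 hpT')
    (fun b hb => (hbdry b hb).adj_of_interior_adj_eq (hsole b hb))
    fun b hb => hsm.1.nbrs_subset_ball1 hp (hbdry b hb) (hsole b hb)

/-- pruning and etching preserve the Euler characteristic: if `p` is
an interior point of a finite smooth domain `G` removed by a pruning step or an
etching step, and the region determined by the interior set `H \ {p}` is again a
smooth domain, then its Euler characteristic equals that of `G`. -/
theorem prune_etch_preserve_euler (T : Set (ℤ × ℤ)) (hfin : T.Finite)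
    (hsm : IsSmoothDomain tri T) (p : ℤ × ℤ) (hp : IsInteriorPt tri T p)
    (hstep : PruningPt tri (interiorSet tri T) p ∨ EtchingPt tri (interiorSet tri T) p)
    (hsm' : IsSmoothDomain tri (⋃ q ∈ interiorSet tri T \ {p}, ball1 tri q)) :
    euler tri (⋃ q ∈ interiorSet tri T \ {p}, ball1 tri q) = euler tri T :=
  prune_etch_preserve_euler_general T hfin hsm p hp hstep

end TriGB
end
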